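/- Let s_f, s_x > 0, let x ~ N(0, s_x·I_n) on ℝⁿ, let w ∈ ℝⁿ with ‖w‖ = 1, and let h : ℝ → ℝ satisfy E[(h(⟨w, x⟩))²] = 1. Define μ_c(x) = ((s_f + 2s_x)/s_f)^{n/4}·exp(−‖x‖²/(2s_f)). Then |E[μ_c(x)·h(⟨w, x⟩)]| ≤ ρ^{−n/4}·(1 + s_x/s_f)^{1/4}, where ρ = 1 + s_x²/(s_f² + 2·s_x·s_f). -/

import Mathlib

open MeasureTheory

/-- The distribution `N(0, s·Iₙ)` on `ℝⁿ`, given as a density with respect to Lebesgue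
measure. -/
noncomputable def gaussMeasure (n : ℕ) (s : ℝ) : Measure (Fin n → ℝ) :=
  MeasureTheory.volume.withDensity fun x =>
    ENNReal.ofReal ((2 * Real.pi * s) ^ (-(n : ℝ) / 2) *
      Real.exp (-(∑ i, (x i) ^ 2) / (2 * s)))

/-!
Rotating `w` to the first coordinate vector (Lebesgue measure and `‖x‖` are rotation invariant)
splits the Gaussian integral into one-dimensional ones over `u ~ N(0, s_x)`: each of the `n - 1`
directions orthogonal to `w` contributes `E[exp(-u²/(2 s_f))] = (1 + s_x/s_f)^{-1/2}`, the
direction of `w` contributes `E[exp(-u²/(2 s_f)) h(u)]`, and the normalisation of `h` becomes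
`E[h(u)²] = 1`. Cauchy–Schwarz bounds the last factor by `E[exp(-u²/s_f)]^{1/2} =
(1 + 2 s_x/s_f)^{-1/4}`, so the correlation is at most `ρ^{-(n-1)/4}`, which is below the claimed
bound since `ρ^{-1/4} (1 + s_x/s_f)^{1/4} ≥ 1`.
-/

open Real ProbabilityTheory
open scoped RealInnerProductSpace

section Rotation

variable {E G : Type*} [NormedAddCommGroup E] [InnerProductSpace ℝ E] [FiniteDimensional ℝ E]
  [MeasurableSpace E] [BorelSpace E] [NormedAddCommGroup G] [NormedSpace ℝ G]

theorem integral_comp_norm_inner_eq_of_norm_eq {v w : E} (h : ‖v‖ = ‖w‖) (F : ℝ → ℝ → G) :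
    ∫ x, F ‖x‖ ⟪v, x⟫ = ∫ x, F ‖x‖ ⟪w, x⟫ := by
  set R := (ℝ ∙ (v - w))ᗮ.reflection
  have hinner (x : E) : ⟪v, R x⟫ = ⟪w, x⟫ := by
    rw [← Submodule.reflection_sub h, ← R.inner_map_map v (R x), Submodule.reflection_reflection]
  rw [← R.measurePreserving.integral_comp R.toHomeomorph.measurableEmbedding]
  simp only [LinearIsometryEquiv.norm_map, hinner]

theorem integral_comp_sum_sq_dotProduct_eq {ι : Type*} [Fintype ι] (i : ι) {w : ι → ℝ}
    (hw : ∑ j, w j ^ 2 = 1) (F : ℝ → ℝ → G) :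
    ∫ x : ι → ℝ, F (∑ j, x j ^ 2) (∑ j, w j * x j) = ∫ x : ι → ℝ, F (∑ j, x j ^ 2) (x i) := by
  classical
  have hw' : ‖WithLp.toLp 2 w‖ = ‖EuclideanSpace.single i (1 : ℝ)‖ := by
    simp [EuclideanSpace.norm_eq, hw]
  have hofLp (g : (ι → ℝ) → G) := (PiLp.volume_preserving_ofLp ι).integral_comp
    (MeasurableEquiv.toLp 2 (ι → ℝ)).symm.measurableEmbedding g
  rw [← hofLp, ← hofLp]
  have := integral_comp_norm_inner_eq_of_norm_eq hw' fun r t => F (r ^ 2) t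
  simp only [EuclideanSpace.real_norm_sq_eq, PiLp.inner_apply, RCLike.inner_apply, conj_trivial,
    PiLp.single_apply, mul_ite, mul_one, mul_zero, Finset.sum_ite_eq', Finset.mem_univ,
    if_true] at this
  simpa only [mul_comm] using this

end Rotation

section CauchySchwarz

variable {α : Type*} [MeasurableSpace α] {μ : Measure α} {f g : α → ℝ}

theorem abs_integral_mul_le_sqrt_mul_sqrt (hf : MemLp f 2 μ) (hg : MemLp g 2 μ) :
    |∫ x, f x * g x ∂μ| ≤ √(∫ x, f x ^ 2 ∂μ) * √(∫ x, g x ^ 2 ∂μ) := by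
  have hholder := integral_mul_norm_le_Lp_mul_Lq (μ := μ) Real.HolderConjugate.two_two
    (by simpa using hf) (by simpa using hg)
  simp only [Real.norm_eq_abs, rpow_two, sq_abs, ← sqrt_eq_rpow] at hholder
  calc |∫ x, f x * g x ∂μ| ≤ ∫ x, |f x| * |g x| ∂μ :=
        abs_integral_le_integral_abs.trans_eq (by simp_rw [abs_mul])
    _ ≤ _ := hholder

theorem abs_integral_mul_le_sqrt_mul_sqrt_of_ne_zero (hf : MemLp f 2 μ) (hf0 : ∀ x, f x ≠ 0)
    (hg : Integrable (fun x => g x ^ 2) μ) :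
    |∫ x, f x * g x ∂μ| ≤ √(∫ x, f x ^ 2 ∂μ) * √(∫ x, g x ^ 2 ∂μ) := by
  by_cases hfg : Integrable (fun x => f x * g x) μ
  · have hg_meas : AEStronglyMeasurable g μ :=
      (hf.1.inv₀.mul hfg.1).congr (ae_of_all _ fun x => by simp [hf0 x])
    exact abs_integral_mul_le_sqrt_mul_sqrt hf ((memLp_two_iff_integrable_sq hg_meas).2 hg)
  · rw [integral_undef hfg, abs_zero]
    positivity

end CauchySchwarz

section Gaussian

variable {s : ℝ}

theorem integral_gaussMeasure {n : ℕ} (hs : 0 ≤ s) (f : (Fin n → ℝ) → ℝ) :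
    ∫ x, f x ∂gaussMeasure n s =
      ∫ x, (2 * π * s) ^ (-(n : ℝ) / 2) * exp (-(∑ i, x i ^ 2) / (2 * s)) * f x := by
  rw [gaussMeasure, integral_withDensity_eq_integral_toReal_smul (by fun_prop)
    (ae_of_all _ fun _ => ENNReal.ofReal_lt_top)]
  congr 1 with x
  rw [ENNReal.toReal_ofReal (by positivity), smul_eq_mul]

theorem gaussMeasure_density_eq_prod {n : ℕ} (hs : 0 < s) (x : Fin n → ℝ) :
    (2 * π * s) ^ (-(n : ℝ) / 2) * exp (-(∑ i, x i ^ 2) / (2 * s)) =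
      ∏ i, gaussianPDFReal 0 s.toNNReal (x i) := by
  simp only [gaussianPDFReal, Real.coe_toNNReal _ hs.le, sub_zero, Finset.prod_mul_distrib,
    Finset.prod_const, Finset.card_univ, Fintype.card_fin, ← Real.exp_sum, neg_div,
    Finset.sum_div, Finset.sum_neg_distrib]
  rw [sqrt_eq_rpow, ← rpow_neg (by positivity), ← rpow_natCast, ← rpow_mul (by positivity)]
  congr 2
  ring

theorem integral_gaussianReal_eq_integral_pdf_mul (hs : 0 < s) (g : ℝ → ℝ) :
    ∫ u, g u ∂gaussianReal 0 s.toNNReal = ∫ u, gaussianPDFReal 0 s.toNNReal u * g u :=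
  integral_gaussianReal_eq_integral_smul (by simpa using hs)

theorem integral_exp_neg_mul_sq_gaussianReal (hs : 0 < s) (c : ℝ) :
    ∫ u, exp (-c * u ^ 2) ∂gaussianReal 0 s.toNNReal = (√(1 + 2 * c * s))⁻¹ := by
  have hexp (u : ℝ) : gaussianPDFReal 0 s.toNNReal u * exp (-c * u ^ 2) =
      (√(2 * π * s))⁻¹ * exp (-(c + 1 / (2 * s)) * u ^ 2) := by
    rw [gaussianPDFReal, Real.coe_toNNReal _ hs.le, mul_assoc, ← exp_add]
    congr 2
    field_simp
    ring
  have hratio : π / (c + 1 / (2 * s)) = 2 * π * s / (1 + 2 * c * s) := by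
    field_simp
    ring
  simp_rw [integral_gaussianReal_eq_integral_pdf_mul hs, hexp, integral_const_mul,
    integral_gaussian, hratio, sqrt_div (by positivity : 0 ≤ 2 * π * s)]
  field_simp [(by positivity : 0 < √(2 * π * s)).ne']

theorem integral_gaussMeasure_exp_mul_comp_dotProduct {m : ℕ} (hs : 0 < s)
    {w : Fin (m + 1) → ℝ} (hw : ∑ j, w j ^ 2 = 1) (c : ℝ) (H : ℝ → ℝ) :
    ∫ x, exp (-c * ∑ i, x i ^ 2) * H (∑ j, w j * x j) ∂gaussMeasure (m + 1) s =
      (√(1 + 2 * c * s))⁻¹ ^ m * ∫ u, exp (-c * u ^ 2) * H u ∂gaussianReal 0 s.toNNReal := by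
  set f : Fin (m + 1) → ℝ → ℝ := fun i t =>
    gaussianPDFReal 0 s.toNNReal t * (exp (-c * t ^ 2) * if i = 0 then H t else 1)
  have hprod (x : Fin (m + 1) → ℝ) :
      (2 * π * s) ^ (-((m + 1 : ℕ) : ℝ) / 2) * exp (-(∑ i, x i ^ 2) / (2 * s)) *
        (exp (-c * ∑ i, x i ^ 2) * H (x 0)) = ∏ i, f i (x i) := by
    simp only [f, Finset.prod_mul_distrib, gaussMeasure_density_eq_prod hs, Finset.mul_sum,
      Real.exp_sum, Finset.prod_ite_eq', Finset.mem_univ, if_true]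
  rw [integral_gaussMeasure hs.le,
    integral_comp_sum_sq_dotProduct_eq 0 hw fun r t => (2 * π * s) ^ (-((m + 1 : ℕ) : ℝ) / 2) *
      exp (-r / (2 * s)) * (exp (-c * r) * H t)]
  simp only [hprod]
  rw [integral_fintype_prod_volume_eq_prod, Fin.prod_univ_succ]
  simp only [f, Fin.succ_ne_zero, if_true, if_false, mul_one,
    ← integral_gaussianReal_eq_integral_pdf_mul hs, integral_exp_neg_mul_sq_gaussianReal hs,
    Finset.prod_const, Finset.card_univ, Fintype.card_fin]
  ring

theorem integral_gaussMeasure_comp_dotProduct {m : ℕ} (hs : 0 < s) {w : Fin (m + 1) → ℝ}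
    (hw : ∑ j, w j ^ 2 = 1) (H : ℝ → ℝ) :
    ∫ x, H (∑ j, w j * x j) ∂gaussMeasure (m + 1) s = ∫ u, H u ∂gaussianReal 0 s.toNNReal := by
  simpa using integral_gaussMeasure_exp_mul_comp_dotProduct hs hw 0 H

theorem abs_integral_exp_neg_mul_sq_mul_le {c : ℝ} (hs : 0 < s) (hc : 0 ≤ c) {h : ℝ → ℝ}
    (hh : Integrable (fun u => h u ^ 2) (gaussianReal 0 s.toNNReal)) :
    |∫ u, exp (-c * u ^ 2) * h u ∂gaussianReal 0 s.toNNReal| ≤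
      √(√(1 + 4 * c * s))⁻¹ * √(∫ u, h u ^ 2 ∂gaussianReal 0 s.toNNReal) := by
  have hexp_sq (u : ℝ) : exp (-c * u ^ 2) ^ 2 = exp (-(2 * c) * u ^ 2) := by
    rw [← exp_nat_mul]
    ring_nf
  have hmem : MemLp (fun u => exp (-c * u ^ 2)) 2 (gaussianReal 0 s.toNNReal) :=
    MemLp.of_bound (by fun_prop) 1 (ae_of_all _ fun u => by
      rw [Real.norm_eq_abs, abs_exp, exp_le_one_iff, neg_mul, neg_nonpos]
      positivity)
  have := abs_integral_mul_le_sqrt_mul_sqrt_of_ne_zero hmem (fun u => (exp_pos _).ne') hh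
  rw [funext hexp_sq, integral_exp_neg_mul_sq_gaussianReal hs] at this
  convert this using 5
  ring

end Gaussian

theorem gaussian_correlation_constant_le (m : ℕ) {P Q : ℝ} (hP : 0 < P) (hPQ : P ≤ Q) :
    Q ^ (((m : ℝ) + 1) / 4) * ((√P)⁻¹ ^ m * √(√Q)⁻¹) ≤
      (P ^ 2 / Q) ^ (-((m : ℝ) + 1) / 4) * P ^ ((1 : ℝ) / 4) := by
  have hQ : 0 < Q := hP.trans_le hPQ
  rw [← log_le_log_iff (by positivity) (by positivity), log_mul (by positivity) (by positivity),
    log_mul (by positivity) (by positivity), log_mul (by positivity) (by positivity),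
    log_rpow hQ, log_rpow (by positivity), log_rpow hP, log_pow, log_inv, log_sqrt hP.le,
    log_sqrt (by positivity), log_inv, log_sqrt hQ.le, log_div (by positivity) hQ.ne', log_pow]
  have := log_le_log hP hPQ
  push_cast
  linarith

/-- Single-node correlation bound: for `x ~ N(0, s_x·Iₙ)`, a unit-norm weight vector `w`,
and an activation `h` with `E[(h(⟨w,x⟩))²] = 1`, the correlation of the node output with the
normalized Gaussian target `μ_c(x) = ((s_f+2s_x)/s_f)^{n/4}·exp(−‖x‖²/(2s_f))` satisfies
`|E[μ_c(x)·h(⟨w,x⟩)]| ≤ ρ^{−n/4}·(1+s_x/s_f)^{1/4}` with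
`ρ = 1 + s_x²/(s_f²+2s_x·s_f)`. -/
theorem stmt11 (n : ℕ) (sf sx : ℝ) (hsf : 0 < sf) (hsx : 0 < sx)
    (μc : (Fin n → ℝ) → ℝ)
    (hμc : ∀ x, μc x = ((sf + 2 * sx) / sf) ^ ((n : ℝ) / 4) *
      Real.exp (-(∑ i, (x i) ^ 2) / (2 * sf)))
    (w : Fin n → ℝ) (hw : ∑ j, (w j) ^ 2 = 1)
    (h : ℝ → ℝ)
    (hh : ∫ x, (h (∑ j, w j * x j)) ^ 2 ∂(gaussMeasure n sx) = 1)
    (ρ : ℝ) (hρ : ρ = 1 + sx ^ 2 / (sf ^ 2 + 2 * sx * sf)) :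
    |∫ x, μc x * h (∑ j, w j * x j) ∂(gaussMeasure n sx)| ≤
      ρ ^ (-(n : ℝ) / 4) * (1 + sx / sf) ^ ((1 : ℝ) / 4) := by
  rcases n with _ | m
  · simp at hw
  set ν := gaussianReal 0 sx.toNNReal
  set a := 1 / (2 * sf) with ha
  have hcorr : ∫ x, μc x * h (∑ j, w j * x j) ∂gaussMeasure (m + 1) sx =
      ((sf + 2 * sx) / sf) ^ (((m + 1 : ℕ) : ℝ) / 4) *
        ((√(1 + 2 * a * sx))⁻¹ ^ m * ∫ u, exp (-a * u ^ 2) * h u ∂ν) := by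
    have hμc' (x : Fin (m + 1) → ℝ) : μc x = ((sf + 2 * sx) / sf) ^ (((m + 1 : ℕ) : ℝ) / 4) *
        exp (-a * ∑ i, x i ^ 2) := by
      rw [hμc, ha]
      ring_nf
    rw [← integral_gaussMeasure_exp_mul_comp_dotProduct hsx hw, ← integral_const_mul]
    congr 1 with x
    rw [hμc', mul_assoc]
  have hh' : ∫ u, h u ^ 2 ∂ν = 1 := by
    rwa [integral_gaussMeasure_comp_dotProduct hsx hw fun u => h u ^ 2] at hh
  have hcs := abs_integral_exp_neg_mul_sq_mul_le hsx (by positivity : 0 ≤ a)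
    (Integrable.of_integral_ne_zero (hh' ▸ one_ne_zero))
  rw [hh', sqrt_one, mul_one] at hcs
  have hP : 1 + 2 * a * sx = 1 + sx / sf := by rw [ha]; field_simp
  have hQ : 1 + 4 * a * sx = (sf + 2 * sx) / sf := by rw [ha]; field_simp; ring
  have hPQ : 1 + sx / sf ≤ (sf + 2 * sx) / sf := by
    rw [add_div, div_self hsf.ne', mul_div_assoc]
    linarith [div_pos hsx hsf]
  have hρ' : ρ = (1 + sx / sf) ^ 2 / ((sf + 2 * sx) / sf) := by rw [hρ]; field_simp; ring
  rw [hcorr, hP, abs_mul, abs_mul, abs_of_pos (by positivity), abs_of_pos (by positivity), hρ']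
  calc _ ≤ ((sf + 2 * sx) / sf) ^ (((m + 1 : ℕ) : ℝ) / 4) *
        ((√(1 + sx / sf))⁻¹ ^ m * √(√((sf + 2 * sx) / sf))⁻¹) := by
        rw [← hQ]; gcongr
    _ ≤ _ := by
      push_cast
      exact gaussian_correlation_constant_le m (by positivity) hPQ
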